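/- Let f ∈ L^2(ℝ^n) have compact support, let θ ∈ C_0^∞(ℝ^n), and let k ∈ ℕ with k > n/2. Define P_θ^{k,U} f(x) = ∫_{1/2}^1 s^{k-1} (1-s)^{-n} ∫ θ(x + (y-x)/(1-s)) f(y) dy ds. Then ‖P_θ^{k,U} f‖_{L^2(ℝ^n)} ≤ ((1 - 2^{n/2 - k})/(k - n/2)) ‖θ‖_{L^1(ℝ^n)} ‖f‖_{L^2(ℝ^n)}. -/

import Mathlib

open MeasureTheory Real Set Filter Metric
open scoped ENNReal Topology
open Function

noncomputable section

/-- `P_θ^{k,U} f(x) = ∫_{1/2}^1 s^{k-1}(1-s)^{-n} ∫ θ(x+(y-x)/(1-s)) f(y) dy ds`. -/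
def PthetaU {n : ℕ} (k : ℕ) (θ f : (Fin n → ℝ) → ℝ) : (Fin n → ℝ) → ℝ :=
  fun x => ∫ s in Ioo (1 / 2 : ℝ) 1,
    (s ^ (k - 1) / (1 - s) ^ n) * ∫ y, θ (x + (1 - s)⁻¹ • (y - x)) * f y

lemma minkowski2 {α β : Type*} [MeasurableSpace α] [MeasurableSpace β]
    {μ : Measure α} {ν : Measure β} [SFinite μ] [SFinite ν] {G : α → β → ℝ≥0∞}
    (hG : Measurable (Function.uncurry G)) :
    (∫⁻ x, (∫⁻ s, G s x ∂μ) ^ (2:ℝ) ∂ν) ^ (1/2:ℝ)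
      ≤ ∫⁻ s, (∫⁻ x, (G s x) ^ (2:ℝ) ∂ν) ^ (1/2:ℝ) ∂μ := by
  set A : α → ℝ≥0∞ := fun s => (∫⁻ x, (G s x) ^ (2:ℝ) ∂ν) ^ (1/2:ℝ) with hA
  have hGm : ∀ s, Measurable (G s) := fun s => hG.comp (measurable_prodMk_left)
  have hGm' : ∀ x, Measurable (fun s => G s x) := fun x => hG.comp (measurable_prodMk_right)
  have hAm : Measurable A := by
    apply Measurable.pow_const
    exact (hG.pow_const _).lintegral_prod_right
  have key : ∫⁻ x, (∫⁻ s, G s x ∂μ) ^ (2:ℝ) ∂ν ≤ (∫⁻ s, A s ∂μ) ^ (2:ℝ) := by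
    have e1 : ∀ x, (∫⁻ s, G s x ∂μ) ^ (2:ℝ)
        = ∫⁻ p : α × α, G p.1 x * G p.2 x ∂(μ.prod μ) := by
      intro x
      rw [lintegral_prod_mul (hGm' x).aemeasurable (hGm' x).aemeasurable,
        ENNReal.rpow_two, sq]
    calc ∫⁻ x, (∫⁻ s, G s x ∂μ) ^ (2:ℝ) ∂ν
        = ∫⁻ x, ∫⁻ p : α × α, G p.1 x * G p.2 x ∂(μ.prod μ) ∂ν := by
          simp_rw [e1]
      _ = ∫⁻ p : α × α, ∫⁻ x, G p.1 x * G p.2 x ∂ν ∂(μ.prod μ) := by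
          rw [lintegral_lintegral_swap]
          exact ((hG.comp (measurable_snd.fst.prodMk measurable_fst)).mul
            (hG.comp (measurable_snd.snd.prodMk measurable_fst))).aemeasurable
      _ ≤ ∫⁻ p : α × α, A p.1 * A p.2 ∂(μ.prod μ) := by
          apply lintegral_mono
          rintro ⟨s, t⟩
          exact ENNReal.lintegral_mul_le_Lp_mul_Lq ν ⟨by norm_num, by norm_num, by norm_num⟩
            (hGm s).aemeasurable (hGm t).aemeasurable
      _ = (∫⁻ s, A s ∂μ) ^ (2:ℝ) := by
          rw [lintegral_prod_mul hAm.aemeasurable hAm.aemeasurable, ENNReal.rpow_two, sq]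
  calc (∫⁻ x, (∫⁻ s, G s x ∂μ) ^ (2:ℝ) ∂ν) ^ (1/2:ℝ)
      ≤ ((∫⁻ s, A s ∂μ) ^ (2:ℝ)) ^ (1/2:ℝ) :=
        ENNReal.rpow_le_rpow key (by norm_num)
    _ = ∫⁻ s, A s ∂μ := by
        rw [← ENNReal.rpow_mul]; norm_num

-- scaling of lintegral under x ↦ s • x + b
lemma lint_scale {n : ℕ} (g : (Fin n → ℝ) → ℝ≥0∞) (hg : Measurable g) {s : ℝ} (hs : 0 < s)
    (b : Fin n → ℝ) :
    ∫⁻ x, g (s • x + b) = ENNReal.ofReal (s ^ (-(n:ℝ))) * ∫⁻ x, g x := by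
  have h0 : ∫⁻ x, g (s • x + b) = ∫⁻ y, g (y + b) ∂(Measure.map (s • ·) volume) := by
    rw [lintegral_map (f := fun y => g (y + b)) (hg.comp (measurable_add_const b)) (measurable_const_smul s)]
  rw [h0, Measure.map_addHaar_smul volume hs.ne', lintegral_smul_measure,
    lintegral_add_right_eq_self (fun y => g y) b]
  congr 1
  rw [Module.finrank_fin_fun, abs_of_pos (by positivity), Real.rpow_neg hs.le,
    Real.rpow_natCast]

-- change of variables in the inner integral
lemma inner_cov {n : ℕ} (θ f : (Fin n → ℝ) → ℝ) {s : ℝ} (hc : 0 < 1 - s) (x : Fin n → ℝ) :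
    ∫ y, θ (x + (1 - s)⁻¹ • (y - x)) * f y
      = (1 - s) ^ n * ∫ z, θ z * f (s • x + (1 - s) • z) := by
  have h1 : ∫ y, θ (x + (1 - s)⁻¹ • (y - x)) * f y
      = ∫ w, θ (x + (1 - s)⁻¹ • w) * f (w + x) := by
    rw [← integral_add_right_eq_self (fun y => θ (x + (1 - s)⁻¹ • (y - x)) * f y) x]
    simp
  have h2 := Measure.integral_comp_smul (volume : Measure (Fin n → ℝ))
    (fun w => θ (x + (1 - s)⁻¹ • w) * f (w + x)) (1 - s)
  rw [Module.finrank_fin_fun] at h2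
  have h3 : ∫ w, θ (x + (1 - s)⁻¹ • w) * f (w + x)
      = (1 - s) ^ n * ∫ z, θ (x + (1 - s)⁻¹ • ((1 - s) • z)) * f ((1 - s) • z + x) := by
    rw [h2, abs_of_pos (by positivity), smul_eq_mul]
    rw [← mul_assoc, mul_inv_cancel₀ (by positivity), one_mul]
  rw [h1, h3]
  congr 1
  have h4 : ∀ z : Fin n → ℝ, θ (x + (1 - s)⁻¹ • ((1 - s) • z)) * f ((1 - s) • z + x)
      = θ (x + z) * f ((1 - s) • z + x) := by
    intro z; rw [inv_smul_smul₀ hc.ne']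
  simp_rw [h4]
  rw [← integral_sub_right_eq_self (fun z => θ (x + z) * f ((1 - s) • z + x)) x]
  congr 1; funext u
  have e1 : x + (u - x) = u := by abel
  have e2 : (1 - s) • (u - x) + x = s • x + (1 - s) • u := by
    rw [smul_sub]; module
  rw [e1, e2]

lemma const_int {n k : ℕ} (hk1 : 1 ≤ k) (hk : (n : ℝ) / 2 < k) :
    ∫⁻ s in Ioo (1/2 : ℝ) 1, ENNReal.ofReal (s ^ ((k:ℝ) - 1 - (n:ℝ)/2))
      = ENNReal.ofReal ((1 - (2:ℝ) ^ ((n:ℝ)/2 - k)) / ((k:ℝ) - (n:ℝ)/2)) := by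
  set r : ℝ := (k:ℝ) - 1 - (n:ℝ)/2 with hr
  have hr1 : r + 1 = (k:ℝ) - (n:ℝ)/2 := by ring
  have hrpos : (0:ℝ) < r + 1 := by rw [hr1]; linarith
  have hcont : ContinuousOn (fun s : ℝ => s ^ r) (Icc (1/2 : ℝ) 1) :=
    ContinuousOn.rpow_const continuousOn_id (fun x hx => Or.inl (by
      have := hx.1; intro h; rw [h] at this; norm_num at this))
  have hint : IntegrableOn (fun s : ℝ => s ^ r) (Ioo (1/2 : ℝ) 1) volume :=
    (hcont.integrableOn_compact isCompact_Icc).mono_set Ioo_subset_Icc_self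
  have hnn : 0 ≤ᵐ[volume.restrict (Ioo (1/2 : ℝ) 1)] fun s : ℝ => s ^ r := by
    filter_upwards [ae_restrict_mem measurableSet_Ioo] with s hs
    have : (0:ℝ) < s := by linarith [hs.1]
    positivity
  rw [← ofReal_integral_eq_lintegral_ofReal hint hnn]
  congr 1
  have : ∫ s in Ioo (1/2 : ℝ) 1, s ^ r = ∫ s in (1/2 : ℝ)..1, s ^ r := by
    rw [intervalIntegral.integral_of_le (by norm_num), integral_Ioc_eq_integral_Ioo]
  rw [this, integral_rpow (Or.inl (by linarith)), Real.one_rpow]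
  have h2 : ((1:ℝ)/2) ^ (r+1) = (2:ℝ) ^ ((n:ℝ)/2 - (k:ℝ)) := by
    rw [one_div, Real.inv_rpow (by norm_num), ← Real.rpow_neg (by norm_num)]
    congr 1; rw [hr1]; ring
  rw [h2, hr1]

theorem main {n : ℕ} (k : ℕ) (hk1 : 1 ≤ k) (hk : (n : ℝ) / 2 < k)
    (θ f : (Fin n → ℝ) → ℝ) (hθm : Continuous θ) (hfm : Measurable f) :
    eLpNorm (PthetaU k θ f) 2 volume
      ≤ ENNReal.ofReal ((1 - (2 : ℝ) ^ ((n : ℝ) / 2 - k)) / ((k : ℝ) - (n : ℝ) / 2)) *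
          (∫⁻ x, (‖θ x‖₊ : ℝ≥0∞)) * eLpNorm f 2 volume := by
  set T : ℝ≥0∞ := ∫⁻ x, (‖θ x‖₊ : ℝ≥0∞) with hT
  set Fn : ℝ≥0∞ := eLpNorm f 2 volume with hFn
  set H : ℝ → (Fin n → ℝ) → ℝ := fun s x =>
    (s ^ (k - 1) / (1 - s) ^ n) * ∫ y, θ (x + (1 - s)⁻¹ • (y - x)) * f y with hH
  -- measurability of H
  have hθmeas : Measurable θ := hθm.measurable
  have hHm : Measurable (uncurry H) := by
    rw [hH]
    simp only [Function.uncurry_def]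
    apply Measurable.mul
    · fun_prop
    · have hint : StronglyMeasurable (uncurry fun (p : ℝ × (Fin n → ℝ)) (y : (Fin n → ℝ)) =>
          θ (p.2 + (1 - p.1)⁻¹ • (y - p.2)) * f y) := by
        apply Measurable.stronglyMeasurable
        simp only [Function.uncurry_def]
        fun_prop
      exact (hint.integral_prod_right).measurable
  have key : ∀ s ∈ Ioo (1/2 : ℝ) 1,
      (∫⁻ x, ((‖H s x‖₊ : ℝ≥0∞)) ^ (2:ℝ)) ^ (1/2:ℝ)
        ≤ ENNReal.ofReal (s ^ ((k:ℝ) - 1 - (n:ℝ)/2)) * (T * Fn) := by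
    rintro s ⟨hs1, hs2⟩
    have hs0 : (0:ℝ) < s := by linarith
    have hc : (0:ℝ) < 1 - s := by linarith
    set J : (Fin n → ℝ) → ℝ := fun x => ∫ z, θ z * f (s • x + (1 - s) • z) with hJ
    have hHJ : ∀ x, H s x = s ^ (k - 1) * J x := by
      intro x
      simp only [hH, hJ]
      rw [inner_cov θ f hc x]
      field_simp
    have hJm : Measurable J := by
      have hint : StronglyMeasurable (uncurry fun (x : (Fin n → ℝ)) (z : (Fin n → ℝ)) =>
          θ z * f (s • x + (1 - s) • z)) := by
        apply Measurable.stronglyMeasurable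
        simp only [Function.uncurry_def]
        fun_prop
      exact (hint.integral_prod_right).measurable
    -- pull out the constant s^(k-1)
    have e1 : ∀ x, ((‖H s x‖₊ : ℝ≥0∞)) = ENNReal.ofReal (s ^ (k-1)) * (‖J x‖₊ : ℝ≥0∞) := by
      intro x
      rw [hHJ x, nnnorm_mul, ENNReal.coe_mul, ← enorm_eq_nnnorm, Real.enorm_eq_ofReal (by positivity)]
    have e2 : (∫⁻ x, ((‖H s x‖₊ : ℝ≥0∞)) ^ (2:ℝ)) ^ (1/2:ℝ)
        = ENNReal.ofReal (s ^ (k-1)) * (∫⁻ x, ((‖J x‖₊ : ℝ≥0∞)) ^ (2:ℝ)) ^ (1/2:ℝ) := by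
      simp_rw [e1, ENNReal.mul_rpow_of_nonneg _ _ (by norm_num : (0:ℝ) ≤ 2)]
      rw [lintegral_const_mul _ (hJm.nnnorm.coe_nnreal_ennreal.pow_const _),
        ENNReal.mul_rpow_of_nonneg _ _ (by norm_num : (0:ℝ) ≤ 1/2),
        ← ENNReal.rpow_mul]
      norm_num
    rw [e2]
    -- Minkowski for J
    have e3 : (∫⁻ x, ((‖J x‖₊ : ℝ≥0∞)) ^ (2:ℝ)) ^ (1/2:ℝ)
        ≤ ∫⁻ z, (∫⁻ x, ((‖θ z * f (s • x + (1 - s) • z)‖₊ : ℝ≥0∞)) ^ (2:ℝ)) ^ (1/2:ℝ) := by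
      refine le_trans ?_ (minkowski2 (G := fun z x =>
        (‖θ z * f (s • x + (1 - s) • z)‖₊ : ℝ≥0∞)) ?_)
      · apply ENNReal.rpow_le_rpow _ (by norm_num)
        apply lintegral_mono
        intro x
        apply ENNReal.rpow_le_rpow _ (by norm_num)
        exact enorm_integral_le_lintegral_enorm _
      · simp only [Function.uncurry_def]
        apply Measurable.coe_nnreal_ennreal
        apply Measurable.nnnorm
        fun_prop
    -- compute the inner lintegral
    have e4 : ∀ z : (Fin n → ℝ), (∫⁻ x, ((‖θ z * f (s • x + (1 - s) • z)‖₊ : ℝ≥0∞)) ^ (2:ℝ)) ^ (1/2:ℝ)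
        = (‖θ z‖₊ : ℝ≥0∞) * (ENNReal.ofReal (s ^ (-((n:ℝ)/2))) * Fn) := by
      intro z
      have : ∀ x, ((‖θ z * f (s • x + (1 - s) • z)‖₊ : ℝ≥0∞)) ^ (2:ℝ)
          = (‖θ z‖₊ : ℝ≥0∞) ^ (2:ℝ) *
            (fun w => ((‖f w‖₊ : ℝ≥0∞)) ^ (2:ℝ)) (s • x + (1 - s) • z) := by
        intro x
        rw [nnnorm_mul, ENNReal.coe_mul, ENNReal.mul_rpow_of_nonneg _ _ (by norm_num : (0:ℝ) ≤ 2)]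
      simp_rw [this]
      have hm2 : Measurable fun x : (Fin n → ℝ) => ((‖f (s • x + (1 - s) • z)‖₊ : ℝ≥0∞)) ^ (2:ℝ) := by
        apply Measurable.pow_const
        apply Measurable.coe_nnreal_ennreal
        apply Measurable.nnnorm
        fun_prop
      rw [lintegral_const_mul _ hm2]
      have hsc := lint_scale (n := n) (fun w => ((‖f w‖₊ : ℝ≥0∞)) ^ (2:ℝ))
        (hfm.nnnorm.coe_nnreal_ennreal.pow_const _) hs0 ((1 - s) • z)
      rw [hsc,
        ENNReal.mul_rpow_of_nonneg _ _ (by norm_num : (0:ℝ) ≤ 1/2),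
        ENNReal.mul_rpow_of_nonneg _ _ (by norm_num : (0:ℝ) ≤ 1/2),
        ENNReal.ofReal_rpow_of_pos (by positivity)]
      have h5 : (s ^ (-(n:ℝ))) ^ (1/2 : ℝ) = s ^ (-((n:ℝ)/2)) := by
        rw [← Real.rpow_mul hs0.le]; ring_nf
      have h6 : Fn = (∫⁻ x, ((‖f x‖₊ : ℝ≥0∞)) ^ (2:ℝ)) ^ (1/2:ℝ) := by
        rw [hFn, eLpNorm_eq_lintegral_rpow_enorm_toReal (by norm_num) (by norm_num)]
        norm_num
        rfl
      have h7 : (((‖θ z‖₊ : ℝ≥0∞)) ^ (2:ℝ)) ^ (1/2:ℝ) = (‖θ z‖₊ : ℝ≥0∞) := by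
        rw [← ENNReal.rpow_mul]; norm_num
      rw [h5, ← h6, h7]
    calc ENNReal.ofReal (s ^ (k-1)) * (∫⁻ x, ((‖J x‖₊ : ℝ≥0∞)) ^ (2:ℝ)) ^ (1/2:ℝ)
        ≤ ENNReal.ofReal (s ^ (k-1)) *
          ∫⁻ z, (∫⁻ x, ((‖θ z * f (s • x + (1 - s) • z)‖₊ : ℝ≥0∞)) ^ (2:ℝ)) ^ (1/2:ℝ) :=
          mul_le_mul_right e3 _
      _ = ENNReal.ofReal (s ^ (k-1)) *
          ∫⁻ z, (‖θ z‖₊ : ℝ≥0∞) * (ENNReal.ofReal (s ^ (-((n:ℝ)/2))) * Fn) := by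
          simp_rw [e4]
      _ = ENNReal.ofReal (s ^ (k-1)) * (T * (ENNReal.ofReal (s ^ (-((n:ℝ)/2))) * Fn)) := by
          rw [lintegral_mul_const _ hθm.measurable.nnnorm.coe_nnreal_ennreal, hT]
      _ = ENNReal.ofReal (s ^ ((k:ℝ) - 1 - (n:ℝ)/2)) * (T * Fn) := by
          have : ENNReal.ofReal (s ^ ((k:ℝ) - 1 - (n:ℝ)/2))
              = ENNReal.ofReal (s ^ (k-1)) * ENNReal.ofReal (s ^ (-((n:ℝ)/2))) := by
            rw [← ENNReal.ofReal_mul (by positivity)]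
            congr 1
            rw [← Real.rpow_natCast s (k-1), ← Real.rpow_add hs0]
            congr 1
            push_cast [hk1]
            ring
          rw [this]
          ring
  -- main chain
  have chain : eLpNorm (PthetaU k θ f) 2 volume
      ≤ ∫⁻ s in Ioo (1/2 : ℝ) 1, (∫⁻ x, ((‖H s x‖₊ : ℝ≥0∞)) ^ (2:ℝ)) ^ (1/2:ℝ) := by
    rw [eLpNorm_eq_lintegral_rpow_enorm_toReal (by norm_num) (by norm_num)]
    norm_num only [ENNReal.toReal_ofNat]
    refine le_trans ?_ (minkowski2 (μ := volume.restrict (Ioo (1/2 : ℝ) 1))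
      (G := fun s x => (‖H s x‖₊ : ℝ≥0∞)) hHm.nnnorm.coe_nnreal_ennreal)
    apply ENNReal.rpow_le_rpow _ (by norm_num)
    apply lintegral_mono
    intro x
    apply ENNReal.rpow_le_rpow _ (by norm_num)
    exact enorm_integral_le_lintegral_enorm _
  refine chain.trans ?_
  calc ∫⁻ s in Ioo (1/2 : ℝ) 1, (∫⁻ x, ((‖H s x‖₊ : ℝ≥0∞)) ^ (2:ℝ)) ^ (1/2:ℝ)
      ≤ ∫⁻ s in Ioo (1/2 : ℝ) 1, ENNReal.ofReal (s ^ ((k:ℝ) - 1 - (n:ℝ)/2)) * (T * Fn) := by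
        apply lintegral_mono_ae
        filter_upwards [ae_restrict_mem measurableSet_Ioo] with s hs
        exact key s hs
    _ = (∫⁻ s in Ioo (1/2 : ℝ) 1, ENNReal.ofReal (s ^ ((k:ℝ) - 1 - (n:ℝ)/2))) * (T * Fn) := by
        have hm3 : Measurable fun s : ℝ => ENNReal.ofReal (s ^ ((k:ℝ) - 1 - (n:ℝ)/2)) := by
          fun_prop
        rw [lintegral_mul_const _ hm3]
    _ = ENNReal.ofReal ((1 - (2:ℝ) ^ ((n:ℝ)/2 - k)) / ((k:ℝ) - (n:ℝ)/2)) * (T * Fn) := by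
        rw [const_int hk1 hk]
    _ = _ := by rw [mul_assoc]

/-- for `k > n/2`,
`‖P_θ^{k,U} f‖_{L²(ℝⁿ)} ≤ ((1 - 2^{n/2-k})/(k - n/2)) ‖θ‖_{L¹(ℝⁿ)} ‖f‖_{L²(ℝⁿ)}`. -/
theorem stmt4 {n : ℕ} (k : ℕ) (hk1 : 1 ≤ k) (hk : (n : ℝ) / 2 < k)
    (θ : (Fin n → ℝ) → ℝ) (hθ : ContDiff ℝ (⊤ : ℕ∞) θ) (hθsupp : HasCompactSupport θ)
    (f : (Fin n → ℝ) → ℝ) (hf : MemLp f 2 volume) (hfsupp : HasCompactSupport f) :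
    eLpNorm (PthetaU k θ f) 2 volume
      ≤ ENNReal.ofReal ((1 - (2 : ℝ) ^ ((n : ℝ) / 2 - k)) / ((k : ℝ) - (n : ℝ) / 2)) *
          (∫⁻ x, (‖θ x‖₊ : ℝ≥0∞)) * eLpNorm f 2 volume := by
  set f' := hf.1.mk f with hf'
  have hmeas : StronglyMeasurable f' := hf.1.stronglyMeasurable_mk
  have heq : f =ᵐ[volume] f' := hf.1.ae_eq_mk
  have hP : PthetaU k θ f = PthetaU k θ f' := by
    funext x
    simp only [PthetaU]
    refine integral_congr_ae (Filter.Eventually.of_forall fun s => ?_)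
    beta_reduce
    congr 1
    have h2 : (fun y => θ (x + (1 - s)⁻¹ • (y - x)) * f y)
        =ᵐ[volume] (fun y => θ (x + (1 - s)⁻¹ • (y - x)) * f' y) :=
      heq.mono fun y hy => by dsimp; rw [hy]
    exact integral_congr_ae h2
  rw [hP, eLpNorm_congr_ae heq]
  exact main k hk1 hk θ f' hθ.continuous hmeas.measurable
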